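/- arXiv:1405.2042 — 3 statements merged into one kernel-verified Lean document; each statement's English description precedes it below -/
import Mathlib

section
/- Let R be a commutative Q-algebra. Then the map z_t : Λ(R) → Map(ℕ, R), defined by z_t(f)(n) = (-1)^n times the coefficient of t^n in -t·(d/dt)log(f), is a bijection; moreover it is a group isomorphism from (Λ(R), ·) to (Map(ℕ,R), +). -/
/-! The sequence `z_t(f)` lists, up to sign and a shift of index, the coefficients of the
logarithmic derivative `f'/f`, which the Leibniz rule turns from products into sums. Over a
ℚ-algebra every power series `h` is `f'/f` for exactly one `f` with constant term `1`: the series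
`exp (∫ h)` is one, and if `f, g` are two then `f/g` has vanishing derivative and constant term `1`,
so it is `1`. -/

open PowerSeries

/-- Logarithmic derivative `f ↦ f' · f⁻¹` of a power series (with constant term `1`,
so that `invOfUnit f 1` is a genuine inverse). -/
noncomputable def logDeriv1 {R : Type*} [CommRing R] (f : R⟦X⟧) : R⟦X⟧ :=
  d⁄dX R f * PowerSeries.invOfUnit f 1

/-- `z_n(f)` is `(-1)^n` times the `t^n`-coefficient of `-t·(d/dt) log f`. -/
noncomputable def zt {R : Type*} [CommRing R] (f : R⟦X⟧) (n : ℕ) : R :=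
  (-1 : R)^n * coeff n (-(X * logDeriv1 f))

section LogDeriv

variable {R : Type*} [CommRing R] {f g : R⟦X⟧}

theorem mul_invOfUnit_one (hf : constantCoeff f = 1) : f * invOfUnit f 1 = 1 :=
  mul_invOfUnit f 1 (by simpa using hf)

theorem logDeriv1_eq_iff (hf : constantCoeff f = 1) (h : R⟦X⟧) :
    logDeriv1 f = h ↔ d⁄dX R f = h * f := by
  have hu := mul_invOfUnit_one hf
  constructor
  · rintro rfl
    rw [logDeriv1, mul_assoc, mul_comm (invOfUnit f 1), hu, mul_one]
  · intro hd
    rw [logDeriv1, hd, mul_assoc, hu, mul_one]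

theorem logDeriv1_one : logDeriv1 (1 : R⟦X⟧) = 0 :=
  (logDeriv1_eq_iff (map_one _) 0).mpr (by rw [derivative_one, zero_mul])

theorem logDeriv1_mul (hf : constantCoeff f = 1) (hg : constantCoeff g = 1) :
    logDeriv1 (f * g) = logDeriv1 f + logDeriv1 g := by
  have hfg : constantCoeff (f * g) = 1 := by rw [map_mul, hf, hg, mul_one]
  rw [logDeriv1_eq_iff hfg, Derivation.leibniz, smul_eq_mul, smul_eq_mul,
    ((logDeriv1_eq_iff hf _).mp rfl), ((logDeriv1_eq_iff hg _).mp rfl)]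
  ring

theorem eq_of_logDeriv1_eq [IsAddTorsionFree R] (hf : constantCoeff f = 1)
    (hg : constantCoeff g = 1) (h : logDeriv1 f = logDeriv1 g) : f = g := by
  set u := invOfUnit g 1
  have hu : constantCoeff u = 1 := by simp [u]
  have hgu : g * u = 1 := mul_invOfUnit_one hg
  have hfu0 : constantCoeff (f * u) = 1 := by rw [map_mul, hf, hu, mul_one]
  have hlog : logDeriv1 (f * u) = 0 := by
    rw [logDeriv1_mul hf hu, h, ← logDeriv1_mul hg hu, hgu, logDeriv1_one]
  have hfu : f * u = 1 := derivative.ext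
    (by rw [(logDeriv1_eq_iff hfu0 0).mp hlog, zero_mul, derivative_one])
    (by rw [hfu0, map_one])
  calc f = f * (g * u) := by rw [hgu, mul_one]
    _ = g * (f * u) := by ring
    _ = g := by rw [hfu, mul_one]

end LogDeriv

section Antiderivative

variable {R : Type*} [CommRing R] [Algebra ℚ R]

noncomputable def antideriv (h : R⟦X⟧) : R⟦X⟧ :=
  X * mk fun n => algebraMap ℚ R (n + 1 : ℚ)⁻¹ * coeff n h

theorem constantCoeff_antideriv (h : R⟦X⟧) : constantCoeff (antideriv h) = 0 := by
  simp [antideriv]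

theorem derivative_antideriv (h : R⟦X⟧) : d⁄dX R (antideriv h) = h := by
  ext n
  have hn : algebraMap ℚ R (n + 1 : ℚ)⁻¹ * (n + 1) = 1 := by
    rw [← map_natCast (algebraMap ℚ R), ← map_one (algebraMap ℚ R), ← map_add, ← map_mul,
      inv_mul_cancel₀ (by positivity)]
  rw [coeff_derivative, antideriv, coeff_succ_X_mul, coeff_mk, mul_right_comm, hn, one_mul]

theorem constantCoeff_exp_subst {F : R⟦X⟧} (hF : constantCoeff F = 0) :
    constantCoeff ((exp R).subst F) = 1 := by
  rw [← coeff_zero_eq_constantCoeff_apply, coeff_subst' (HasSubst.of_constantCoeff_zero' hF),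
    finsum_eq_single _ 0]
  · simp
  · intro d hd
    rw [coeff_zero_eq_constantCoeff_apply, map_pow, hF, zero_pow hd, smul_zero]

theorem logDeriv1_exp_subst_antideriv (h : R⟦X⟧) :
    logDeriv1 ((exp R).subst (antideriv h)) = h := by
  have hF := constantCoeff_antideriv h
  rw [logDeriv1_eq_iff (constantCoeff_exp_subst hF),
    derivative_subst (HasSubst.of_constantCoeff_zero' hF), derivative_exp,
    derivative_antideriv, mul_comm]

theorem existsUnique_logDeriv1_eq (h : R⟦X⟧) :
    ∃! f : R⟦X⟧, constantCoeff f = 1 ∧ logDeriv1 f = h := by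
  have := IsAddTorsionFree.of_module_rat R
  refine ⟨_, ⟨constantCoeff_exp_subst (constantCoeff_antideriv h),
    logDeriv1_exp_subst_antideriv h⟩, ?_⟩
  rintro g ⟨hg, rfl⟩
  exact eq_of_logDeriv1_eq hg (constantCoeff_exp_subst (constantCoeff_antideriv _))
    (logDeriv1_exp_subst_antideriv _).symm

end Antiderivative

section Zt

variable {R : Type*} [CommRing R]

theorem zt_mul {f g : R⟦X⟧} (hf : constantCoeff f = 1) (hg : constantCoeff g = 1) (n : ℕ) :
    zt (f * g) n = zt f n + zt g n := by
  simp only [zt, logDeriv1_mul hf hg, mul_add, neg_add, map_add]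

theorem zt_succ (f : R⟦X⟧) (n : ℕ) : zt f (n + 1) = (-1) ^ n * coeff n (logDeriv1 f) := by
  rw [zt, map_neg, coeff_succ_X_mul, pow_succ]
  ring

theorem zt_eq_iff (f : R⟦X⟧) (α : ℕ → R) :
    (∀ n, 1 ≤ n → zt f n = α n) ↔ logDeriv1 f = mk fun n => (-1) ^ n * α (n + 1) := by
  have hsq (n : ℕ) : (-1 : R) ^ n * (-1) ^ n = 1 := by rw [← mul_pow]; simp
  constructor
  · intro hz
    ext n
    rw [coeff_mk, ← hz (n + 1) n.succ_pos, zt_succ, ← mul_assoc, hsq, one_mul]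
  · intro hf n hn
    obtain ⟨n, rfl⟩ := Nat.exists_eq_add_one_of_ne_zero (Nat.one_le_iff_ne_zero.mp hn)
    rw [zt_succ, hf, coeff_mk, ← mul_assoc, hsq, one_mul]

end Zt

/-- Over a ℚ-algebra, `z_t : Λ(R) → Map(ℕ, R)` is a group homomorphism from
(Λ(R), ·) to pointwise addition, and is bijective. -/
theorem stmt7 {R : Type*} [CommRing R] [Algebra ℚ R] :
    (∀ f g : R⟦X⟧, PowerSeries.constantCoeff f = 1 → PowerSeries.constantCoeff g = 1 →
      ∀ n, 1 ≤ n → zt (f * g) n = zt f n + zt g n) ∧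
    (∀ α : ℕ → R, ∃! f : R⟦X⟧,
      PowerSeries.constantCoeff f = 1 ∧ ∀ n, 1 ≤ n → zt f n = α n) := by
  refine ⟨fun f g hf hg n _ => zt_mul hf hg n, fun α => ?_⟩
  simp_rw [zt_eq_iff]
  exact existsUnique_logDeriv1_eq _
end

section
/- Let S be a commutative ring that is a Q-algebra, equipped with additive maps ψ^n : S → S (n ≥ 1) with ψ^1 = id (a pre-ψ-ring structure). Then there exists a unique pre-λ-ring structure on S whose Adams operations are the given ψ^n. -/
open PowerSeries

/-- A pre-λ-ring: a commutative ring `R` with operations `λ^n` satisfying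
`λ^0(r) = 1`, `λ^1 = id` and `λ^n(r+s) = ∑_{i+j=n} λ^i(r) λ^j(s)`. -/
structure PreLambdaRing (R : Type*) [CommRing R] where
  lam : ℕ → R → R
  lam_zero : ∀ r, lam 0 r = 1
  lam_one : ∀ r, lam 1 r = r
  lam_add : ∀ n r s, lam n (r + s) = ∑ i ∈ Finset.range (n+1), lam i r * lam (n-i) s

/-- The series `λ_t(r) = ∑ λ^i(r) t^i`. -/
noncomputable def lambdaSeries {R : Type*} [CommRing R] (L : PreLambdaRing R) (r : R) : R⟦X⟧ :=
  PowerSeries.mk fun i => L.lam i r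

/-- The Adams operations, defined by `∑_{k≥1} ψ^k(r) (-t)^k = -t·(d/dt) log λ_t(r)`;
so `ψ^n(r)` is `(-1)^n` times the `t^n`-coefficient of `-t·(d/dt) log λ_t(r)`. -/
noncomputable def adams {R : Type*} [CommRing R] (L : PreLambdaRing R) (n : ℕ) (r : R) : R :=
  (-1 : R)^n * coeff (R := R) n (-(X * logDeriv1 (lambdaSeries L r)))

/-!
A pre-λ-structure is determined by its series `λ_t(r)`, and the pre-λ axiom `λ_t(r + s) =
λ_t(r) λ_t(s)` says that `r ↦ λ_t(r)` is a homomorphism to the multiplicative group of series with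
constant term `1`. Prescribing the Adams operations amounts to prescribing `t · λ_t(r)' / λ_t(r) =
h_r := ∑_{k ≥ 1} (-1)^{k+1} ψ^k(r) t^k`. Over a `ℚ`-algebra the equation `t F' = F h` with
`F(0) = 1` and `h(0) = 0` has exactly one solution `F = exp ∫ h(t)/t dt`, since its coefficients
obey `(n+1) F_{n+1} = ∑_{j ≤ n} F_j h_{n+1-j}`. By the Leibniz rule these solutions turn sums of
`h`'s into products, so additivity of the `ψ^n` makes `r ↦ exp ∫ h_r/t` a pre-λ-structure, and it
is the only one with Adams operations `ψ^n`.
-/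

open Finset

namespace PowerSeries

variable {R : Type*} [CommRing R]

theorem coeff_succ_X_mul_derivative (F : R⟦X⟧) (n : ℕ) :
    coeff (n + 1) (X * d⁄dX R F) = (n + 1) * coeff (n + 1) F := by
  rw [coeff_succ_X_mul, coeff_derivative, mul_comm]

theorem coeff_succ_mul_of_constantCoeff_eq_zero {h : R⟦X⟧} (h0 : constantCoeff h = 0)
    (F : R⟦X⟧) (n : ℕ) :
    coeff (n + 1) (F * h) = ∑ j ∈ range (n + 1), coeff j F * coeff (n + 1 - j) h := by
  rw [coeff_mul, Nat.sum_antidiagonal_eq_sum_range_succ_mk, sum_range_succ]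
  simp [h0]

theorem X_mul_derivative_eq_mul_iff {h : R⟦X⟧} (h0 : constantCoeff h = 0) (F : R⟦X⟧) :
    X * d⁄dX R F = F * h ↔ ∀ n : ℕ,
      (n + 1 : R) * coeff (n + 1) F = ∑ j ∈ range (n + 1), coeff j F * coeff (n + 1 - j) h := by
  refine ⟨fun hF n => ?_, fun hF => ext fun n => ?_⟩
  · rw [← coeff_succ_X_mul_derivative, hF, coeff_succ_mul_of_constantCoeff_eq_zero h0]
  · cases n with
    | zero => simp [h0]
    | succ n => rw [coeff_succ_X_mul_derivative, hF, coeff_succ_mul_of_constantCoeff_eq_zero h0]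

theorem X_mul_logDeriv1_eq_iff {F h : R⟦X⟧} (hF : constantCoeff F = 1) :
    X * logDeriv1 F = h ↔ X * d⁄dX R F = F * h := by
  have hinv : F * invOfUnit F 1 = 1 := mul_invOfUnit F 1 (by simpa using hF)
  unfold logDeriv1
  constructor
  · rintro rfl
    linear_combination (-(X * d⁄dX R F)) * hinv
  · intro hode
    linear_combination invOfUnit F 1 * hode + h * hinv

section RatAlgebra

variable [Algebra ℚ R]

theorem isUnit_natCast_add_one (n : ℕ) : IsUnit (n + 1 : R) := by
  simpa using (isUnit_iff_ne_zero.2 (n.cast_add_one_ne_zero : (n + 1 : ℚ) ≠ 0)).map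
    (algebraMap ℚ R)

theorem eq_of_X_mul_derivative_eq_mul {h F G : R⟦X⟧} (h0 : constantCoeff h = 0)
    (hFG : constantCoeff F = constantCoeff G)
    (hF : X * d⁄dX R F = F * h) (hG : X * d⁄dX R G = G * h) : F = G := by
  rw [X_mul_derivative_eq_mul_iff h0] at hF hG
  ext n
  induction n using Nat.strong_induction_on with
  | _ n ih =>
    cases n with
    | zero => simpa using hFG
    | succ n =>
      refine (isUnit_natCast_add_one n).mul_left_cancel ?_
      rw [hF, hG]
      exact sum_congr rfl fun j hj => by rw [ih j (mem_range.1 hj)]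

/-- The coefficients of `exp ∫ h(t)/t dt`, from the recursion
`(n+1) a_{n+1} = ∑_{j ≤ n} a_j h_{n+1-j}`. -/
noncomputable def eulerExpCoeff (h : R⟦X⟧) : ℕ → R
  | 0 => 1
  | n + 1 => algebraMap ℚ R (n + 1)⁻¹ *
      ∑ j : Fin (n + 1), eulerExpCoeff h j * coeff (n + 1 - j) h

noncomputable def eulerExp (h : R⟦X⟧) : R⟦X⟧ :=
  mk (eulerExpCoeff h)

@[simp] theorem constantCoeff_eulerExp (h : R⟦X⟧) : constantCoeff (eulerExp h) = 1 := by
  rw [← coeff_zero_eq_constantCoeff_apply, eulerExp, coeff_mk, eulerExpCoeff]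

theorem coeff_one_eulerExp (h : R⟦X⟧) : coeff 1 (eulerExp h) = coeff 1 h := by
  simp [eulerExp, eulerExpCoeff]

theorem X_mul_derivative_eulerExp {h : R⟦X⟧} (h0 : constantCoeff h = 0) :
    X * d⁄dX R (eulerExp h) = eulerExp h * h := by
  rw [X_mul_derivative_eq_mul_iff h0]
  intro n
  have hcancel : (n + 1 : R) * algebraMap ℚ R (n + 1)⁻¹ = 1 := by
    rw [show (n + 1 : R) = algebraMap ℚ R (n + 1) by simp, ← map_mul,
      mul_inv_cancel₀ (n.cast_add_one_ne_zero), map_one]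
  simp only [eulerExp, coeff_mk, eulerExpCoeff, ← mul_assoc, hcancel, one_mul]
  exact Fin.sum_univ_eq_sum_range (fun j => eulerExpCoeff h j * coeff (n + 1 - j) h) (n + 1)

theorem eq_eulerExp {h F : R⟦X⟧} (h0 : constantCoeff h = 0) (hF1 : constantCoeff F = 1)
    (hF : X * d⁄dX R F = F * h) : F = eulerExp h :=
  eq_of_X_mul_derivative_eq_mul h0 (by rw [hF1, constantCoeff_eulerExp]) hF
    (X_mul_derivative_eulerExp h0)

theorem eulerExp_add {h k : R⟦X⟧} (h0 : constantCoeff h = 0) (k0 : constantCoeff k = 0) :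
    eulerExp (h + k) = eulerExp h * eulerExp k := by
  refine (eq_eulerExp (by rw [map_add, h0, k0, add_zero]) (by simp) ?_).symm
  rw [Derivation.leibniz, smul_eq_mul, smul_eq_mul]
  linear_combination eulerExp k * X_mul_derivative_eulerExp h0 +
    eulerExp h * X_mul_derivative_eulerExp k0

end RatAlgebra

end PowerSeries

section Adams

variable {R : Type*} [CommRing R]

noncomputable def psiSeries (ψ : ℕ → R → R) (r : R) : R⟦X⟧ :=
  mk fun k => if k = 0 then 0 else (-1) ^ (k + 1) * ψ k r

@[simp] theorem constantCoeff_psiSeries (ψ : ℕ → R → R) (r : R) :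
    constantCoeff (psiSeries ψ r) = 0 := by
  simp [psiSeries, ← coeff_zero_eq_constantCoeff_apply]

theorem coeff_one_psiSeries (ψ : ℕ → R → R) (r : R) : coeff 1 (psiSeries ψ r) = ψ 1 r := by
  simp [psiSeries]

theorem psiSeries_add {ψ : ℕ → R → R} (hadd : ∀ n, 1 ≤ n → ∀ r s : R, ψ n (r + s) = ψ n r + ψ n s)
    (r s : R) : psiSeries ψ (r + s) = psiSeries ψ r + psiSeries ψ s := by
  ext k
  rcases k.eq_zero_or_pos with rfl | hk
  · simp [psiSeries]
  · simp [psiSeries, hk.ne', hadd k hk, mul_add]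

@[simp] theorem constantCoeff_lambdaSeries (L : PreLambdaRing R) (r : R) :
    constantCoeff (lambdaSeries L r) = 1 := by
  rw [← coeff_zero_eq_constantCoeff_apply, lambdaSeries, coeff_mk, L.lam_zero]

theorem adams_eq_iff (L : PreLambdaRing R) (n : ℕ) (r x : R) :
    adams L n r = x ↔ coeff n (X * logDeriv1 (lambdaSeries L r)) = (-1) ^ (n + 1) * x := by
  have hsign : ((-1) ^ (n + 1) * (-1) ^ (n + 1) : R) = 1 := by rw [← mul_pow]; simp
  rw [adams, map_neg, show ∀ c : R, (-1) ^ n * -c = (-1) ^ (n + 1) * c from fun c => by ring]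
  constructor
  · rintro rfl
    rw [← mul_assoc, hsign, one_mul]
  · intro hc
    rw [hc, ← mul_assoc, hsign, one_mul]

theorem forall_adams_eq_iff {L : PreLambdaRing R} {ψ : ℕ → R → R} {r : R} :
    (∀ n, 1 ≤ n → adams L n r = ψ n r) ↔ X * logDeriv1 (lambdaSeries L r) = psiSeries ψ r := by
  simp_rw [adams_eq_iff, PowerSeries.ext_iff]
  refine ⟨fun h n => ?_, fun h n hn => ?_⟩
  · rcases n with _ | n
    · simp [psiSeries]
    · simpa [psiSeries] using h (n + 1) (by omega)
  · simpa [psiSeries, show n ≠ 0 by omega] using h n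

theorem PreLambdaRing.ext_of_lambdaSeries {L L' : PreLambdaRing R}
    (h : ∀ r, lambdaSeries L r = lambdaSeries L' r) : L = L' := by
  obtain ⟨lam, _, _, _⟩ := L
  obtain ⟨lam', _, _, _⟩ := L'
  obtain rfl : lam = lam' := funext₂ fun n r => by
    simpa [lambdaSeries] using congrArg (coeff n) (h r)
  rfl

variable [Algebra ℚ R]

theorem forall_adams_eq_iff_lambdaSeries_eq {L : PreLambdaRing R} {ψ : ℕ → R → R} {r : R} :
    (∀ n, 1 ≤ n → adams L n r = ψ n r) ↔ lambdaSeries L r = eulerExp (psiSeries ψ r) := by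
  rw [forall_adams_eq_iff, X_mul_logDeriv1_eq_iff (constantCoeff_lambdaSeries L r)]
  exact ⟨eq_eulerExp (constantCoeff_psiSeries ψ r) (constantCoeff_lambdaSeries L r),
    fun h => h ▸ X_mul_derivative_eulerExp (constantCoeff_psiSeries ψ r)⟩

noncomputable def PreLambdaRing.ofAdams (ψ : ℕ → R → R) (h1 : ∀ r, ψ 1 r = r)
    (hadd : ∀ n, 1 ≤ n → ∀ r s : R, ψ n (r + s) = ψ n r + ψ n s) : PreLambdaRing R where
  lam n r := coeff n (eulerExp (psiSeries ψ r))
  lam_zero r := by simp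
  lam_one r := by rw [coeff_one_eulerExp, coeff_one_psiSeries, h1]
  lam_add _ r s := by
    rw [psiSeries_add hadd, eulerExp_add (constantCoeff_psiSeries ψ r)
      (constantCoeff_psiSeries ψ s), coeff_mul, Nat.sum_antidiagonal_eq_sum_range_succ_mk]

theorem lambdaSeries_ofAdams (ψ : ℕ → R → R) (h1 : ∀ r, ψ 1 r = r)
    (hadd : ∀ n, 1 ≤ n → ∀ r s : R, ψ n (r + s) = ψ n r + ψ n s) (r : R) :
    lambdaSeries (PreLambdaRing.ofAdams ψ h1 hadd) r = eulerExp (psiSeries ψ r) :=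
  ext fun _ => coeff_mk _ _

end Adams

/-- A pre-ψ-ring structure on a ℚ-algebra lifts to a unique pre-λ-ring structure whose
Adams operations are the given `ψ^n`. -/
theorem stmt10 {S : Type*} [CommRing S] [Algebra ℚ S] (ψ : ℕ → S → S)
    (h1 : ∀ r, ψ 1 r = r)
    (hadd : ∀ n, 1 ≤ n → ∀ r s : S, ψ n (r + s) = ψ n r + ψ n s) :
    ∃! L : PreLambdaRing S, ∀ n, 1 ≤ n → ∀ r : S, adams L n r = ψ n r := by
  refine ⟨.ofAdams ψ h1 hadd, fun n hn r => ?_, fun L hL => ?_⟩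
  · exact forall_adams_eq_iff_lambdaSeries_eq.2 (lambdaSeries_ofAdams ψ h1 hadd r) n hn
  · exact PreLambdaRing.ext_of_lambdaSeries fun r =>
      (forall_adams_eq_iff_lambdaSeries_eq.1 fun n hn => hL n hn r).trans
        (lambdaSeries_ofAdams ψ h1 hadd r).symm
end

section
/- Let G be a finite group acting on a finite set X, and let χ ∈ Map(G, ℂ) be the permutation character χ(g) = |{x ∈ X : gx = x}|. Then for every g ∈ G and every n ≥ 1, χ(g^n) = χ(g^{gcd(n, |G|)}). -/
/-! The fixed points of an element depend only on the cyclic subgroup it generates, and since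
`g ^ |G| = 1`, Bézout shows that `g ^ n` and `g ^ gcd(n, |G|)` generate the same cyclic subgroup. -/

open Subgroup

theorem MulAction.smul_eq_self_iff_of_zpowers_eq {G X : Type*} [Group G] [MulAction G X]
    {a b : G} (h : zpowers a = zpowers b) (x : X) : a • x = x ↔ b • x = x := by
  simp only [← mem_stabilizer_iff, ← zpowers_le, h]

theorem zpowers_pow_gcd_of_pow_eq_one {G : Type*} [Group G] {g : G} {m : ℕ} (hm : g ^ m = 1)
    (n : ℕ) : zpowers (g ^ n.gcd m) = zpowers (g ^ n) := by
  apply le_antisymm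
  · rw [zpowers_le]
    have bezout : g ^ n.gcd m = (g ^ n) ^ n.gcdA m := by
      rw [← zpow_natCast, Nat.gcd_eq_gcd_ab, zpow_add, zpow_mul, zpow_mul, zpow_natCast,
        zpow_natCast, hm, one_zpow, mul_one]
    exact bezout ▸ zpow_mem_zpowers _ _
  · rw [zpowers_le]
    have pow_eq : g ^ n = (g ^ n.gcd m) ^ (n / n.gcd m) := by
      rw [← pow_mul, Nat.mul_div_cancel' (Nat.gcd_dvd_left n m)]
    exact pow_eq ▸ npow_mem_zpowers _ _

theorem stmt18_general {G X : Type*} [Group G] [Fintype G] [Fintype X] [DecidableEq X]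
    [MulAction G X] (g : G) (n : ℕ) :
    (Fintype.card {x : X // g ^ n • x = x} : ℂ) =
      (Fintype.card {x : X // g ^ (Nat.gcd n (Fintype.card G)) • x = x} : ℂ) := by
  have same_zpowers := zpowers_pow_gcd_of_pow_eq_one (pow_card_eq_one (x := g)) n
  rw [Fintype.card_congr (Equiv.subtypeEquivRight
    (MulAction.smul_eq_self_iff_of_zpowers_eq same_zpowers))]

/-- For the permutation character `χ(g) = #{x : g • x = x}` of a finite group acting on a
finite set, `χ(g^n) = χ(g^gcd(n,|G|))` for every `n ≥ 1`. -/
theorem stmt18 {G X : Type*} [Group G] [Fintype G] [Fintype X] [DecidableEq X]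
    [MulAction G X] (g : G) (n : ℕ) (hn : 1 ≤ n) :
    (Fintype.card {x : X // g ^ n • x = x} : ℂ) =
      (Fintype.card {x : X // g ^ (Nat.gcd n (Fintype.card G)) • x = x} : ℂ) :=
  stmt18_general g n
end
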